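/- arXiv:2111.05751 — 4 statements merged into one kernel-verified Lean document; each statement's English description precedes it below -/
import Mathlib

section
/- There exist an absolute constant c ∈ (0,1) and a threshold p₀ such that: for every prime p ≥ p₀, every positive integer n, every proper multiplicative subgroup Γ of 𝔽_p^* with Γ = −Γ, and every finite set S ⊆ 𝔽_p, there exists a set T ⊆ 𝔽_p with S ⊆ T, |T| ≤ 2^n |S| + n, and |Γ_T| ≤ (1 − c)^n |Γ_S|. -/
/-!
Write `Γ'` for the image of `Γ` in `𝔽_p`; as `Γ` is proper, `|Γ'| ≤ (p - 1) / 2`. Adjoining a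
point `t` to `S` cuts `Γ_S` down to `Γ_S ∩ (Γ' - t)`, and averaging over `t ∈ 𝔽_p` gives
`∑_t |Γ_S ∩ (Γ' - t)| = |Γ_S| |Γ'| ≤ p |Γ_S| / 2`, so some `t` at least halves `|Γ_S|`.
Adjoining `n` such points one at a time yields `T` with `|T| ≤ |S| + n` and
`|Γ_T| ≤ 2⁻ⁿ |Γ_S|`, i.e. the claim with `c = 1/2`.
-/

open Finset

/-- For a multiplicative subgroup `Γ ≤ 𝔽_p^*` and a finite set `S ⊆ 𝔽_p`,
`Γ_S := Γ ∩ ⋂_{s ∈ S} (Γ − s)`, viewed inside `𝔽_p`. -/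
def gammaShifts {p : ℕ} (Γ : Subgroup (ZMod p)ˣ) (S : Finset (ZMod p)) : Set (ZMod p) :=
  {x | (∃ γ ∈ Γ, ((γ : (ZMod p)ˣ) : ZMod p) = x) ∧
    ∀ s ∈ S, ∃ γ ∈ Γ, ((γ : (ZMod p)ˣ) : ZMod p) = x + s}

section Averaging

variable {α : Type*} [AddGroup α]

theorem Finset.sum_card_filter_add_mem [Fintype α] [DecidableEq α] (A G : Finset α) :
    ∑ t, #{x ∈ A | x + t ∈ G} = #A * #G := by
  have hcount (x : α) : ∑ t, (if x + t ∈ G then 1 else 0) = #G :=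
    calc ∑ t, (if x + t ∈ G then 1 else 0) = ∑ u, (if u ∈ G then 1 else 0) :=
          Equiv.sum_comp (Equiv.addLeft x) (fun u => if u ∈ G then 1 else 0)
      _ = #G := by simp
  simp only [card_filter]
  rw [sum_comm, Finset.sum_congr rfl fun x _ => hcount x, sum_const, smul_eq_mul]

theorem Finset.exists_card_mul_card_filter_add_mem_le [Fintype α] [DecidableEq α]
    (A G : Finset α) : ∃ t, Fintype.card α * #{x ∈ A | x + t ∈ G} ≤ #A * #G := by
  obtain ⟨t, -, ht⟩ := exists_le_of_sum_le (univ_nonempty (α := α))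
    (f := fun t => Fintype.card α * #{x ∈ A | x + t ∈ G}) (g := fun _ => #A * #G)
    (by rw [← mul_sum, sum_card_filter_add_mem, sum_const, card_univ, smul_eq_mul])
  exact ⟨t, ht⟩

theorem Set.exists_two_mul_ncard_inter_preimage_add_le [Finite α] (A G : Set α)
    (hG : 2 * G.ncard ≤ Nat.card α) : ∃ t, 2 * (A ∩ (· + t) ⁻¹' G).ncard ≤ A.ncard := by
  classical
  have := Fintype.ofFinite α
  obtain ⟨A, rfl⟩ := A.toFinite.exists_finset_coe
  obtain ⟨G, rfl⟩ := G.toFinite.exists_finset_coe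
  obtain ⟨t, ht⟩ := exists_card_mul_card_filter_add_mem_le A G
  have hcoe : (A : Set α) ∩ (· + t) ⁻¹' G = ↑{x ∈ A | x + t ∈ G} := by
    ext x; simp
  refine ⟨t, ?_⟩
  rw [hcoe, Set.ncard_coe_finset, Set.ncard_coe_finset]
  rw [Set.ncard_coe_finset, Nat.card_eq_fintype_card] at hG
  have hpos : 0 < Fintype.card α := Fintype.card_pos
  nlinarith

end Averaging

theorem Subgroup.two_mul_card_le_of_ne_top {G : Type*} [Group G] [Finite G] {H : Subgroup G}
    (hH : H ≠ ⊤) : 2 * Nat.card H ≤ Nat.card G := by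
  rw [← H.card_mul_index, mul_comm]
  exact Nat.mul_le_mul_left _ (H.one_lt_index_of_ne_top hH)

theorem Finset.exists_superset_two_pow_mul_le {α : Type*} [DecidableEq α] (f : Finset α → ℕ)
    (hf : ∀ S, ∃ t, 2 * f (insert t S) ≤ f S) (S : Finset α) (n : ℕ) :
    ∃ T, S ⊆ T ∧ #T ≤ #S + n ∧ 2 ^ n * f T ≤ f S := by
  induction n with
  | zero => exact ⟨S, subset_rfl, le_rfl, by simp⟩
  | succ n ih =>
    obtain ⟨T, hST, hcard, hle⟩ := ih
    obtain ⟨t, ht⟩ := hf T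
    refine ⟨insert t T, hST.trans (subset_insert t T), ?_, ?_⟩
    · have := card_insert_le t T; omega
    · calc 2 ^ (n + 1) * f (insert t T) = 2 ^ n * (2 * f (insert t T)) := by ring
        _ ≤ 2 ^ n * f T := Nat.mul_le_mul_left _ ht
        _ ≤ f S := hle

section GammaShifts

variable {p : ℕ} (Γ : Subgroup (ZMod p)ˣ)

theorem gammaShifts_insert (S : Finset (ZMod p)) (t : ZMod p) :
    gammaShifts Γ (insert t S) =
      gammaShifts Γ S ∩ (· + t) ⁻¹' (Units.val '' (Γ : Set (ZMod p)ˣ)) := by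
  ext x
  simp only [gammaShifts, Set.mem_inter_iff, Set.mem_ofPred_eq, Set.mem_preimage,
    Set.mem_image, SetLike.mem_coe, forall_mem_insert]
  tauto

theorem two_mul_ncard_image_val_le [Fact p.Prime] (hΓ : Γ ≠ ⊤) :
    2 * (Units.val '' (Γ : Set (ZMod p)ˣ)).ncard ≤ Nat.card (ZMod p) := by
  rw [Set.ncard_image_of_injective _ Units.val_injective, ← Nat.card_coe_set_eq,
    Nat.card_zmod]
  calc 2 * Nat.card Γ ≤ Nat.card (ZMod p)ˣ := Subgroup.two_mul_card_le_of_ne_top hΓ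
    _ = p - 1 := by rw [Nat.card_eq_fintype_card, ZMod.card_units]
    _ ≤ p := Nat.sub_le p 1

theorem exists_two_mul_ncard_gammaShifts_insert_le [Fact p.Prime] (hΓ : Γ ≠ ⊤)
    (S : Finset (ZMod p)) :
    ∃ t, 2 * (gammaShifts Γ (insert t S)).ncard ≤ (gammaShifts Γ S).ncard := by
  simp only [gammaShifts_insert]
  exact Set.exists_two_mul_ncard_inter_preimage_add_le _ _ (two_mul_ncard_image_val_le Γ hΓ)

end GammaShifts

theorem stmt_3 :
    ∃ c : ℝ, 0 < c ∧ c < 1 ∧ ∃ p₀ : ℕ, ∀ (p : ℕ) [Fact p.Prime], p₀ ≤ p →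
      ∀ n : ℕ, 0 < n →
        ∀ Γ : Subgroup (ZMod p)ˣ, Γ ≠ ⊤ → (∀ x : (ZMod p)ˣ, x ∈ Γ → -x ∈ Γ) →
          ∀ S : Finset (ZMod p), ∃ T : Finset (ZMod p),
            S ⊆ T ∧ T.card ≤ 2 ^ n * S.card + n ∧
            ((gammaShifts Γ T).ncard : ℝ) ≤ (1 - c) ^ n * (gammaShifts Γ S).ncard := by
  refine ⟨1 / 2, by norm_num, by norm_num, 0, fun p _ _ n _ Γ hΓ _ S => ?_⟩
  obtain ⟨T, hST, hcard, hhalve⟩ := Finset.exists_superset_two_pow_mul_le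
    (fun T => (gammaShifts Γ T).ncard) (exists_two_mul_ncard_gammaShifts_insert_le Γ hΓ) S n
  refine ⟨T, hST, hcard.trans (by gcongr; exact Nat.le_mul_of_pos_left _ (by positivity)), ?_⟩
  rw [show (1 : ℝ) - 1 / 2 = 2⁻¹ by norm_num, inv_pow, le_inv_mul_iff₀ (by positivity)]
  exact_mod_cast hhalve
end

section
/- Let s, t ∈ ℤ[i] be Gaussian integers with complex absolute values |s| ≥ 2 and |t| ≥ 2, and let u_s^* = (1, 0; s, 1) and u_t = (1, t; 0, 1) in SL₂(ℤ[i]). Then the group homomorphism φ from the free group on two generators to SL₂(ℤ[i]) sending the first generator to u_s^* and the second to u_t is injective; moreover, for every non-identity element w of the free group, φ(w) is not a scalar matrix (i.e., φ(w) ≠ λ·I for every λ ∈ ℤ[i]). In particular, the subgroup of SL₂(ℤ[i]) generated by u_s^* and u_t is free of rank 2. -/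
open scoped ComplexConjugate

/-- The lower unipotent matrix `u_s^* = (1, 0; s, 1)` in `SL₂(ℤ[i])`. -/
def lowerUnip (s : GaussianInt) : Matrix.SpecialLinearGroup (Fin 2) GaussianInt :=
  ⟨!![1, 0; s, 1], by simp [Matrix.det_fin_two_of]⟩

/-- The upper unipotent matrix `u_t = (1, t; 0, 1)` in `SL₂(ℤ[i])`. -/
def upperUnip (t : GaussianInt) : Matrix.SpecialLinearGroup (Fin 2) GaussianInt :=
  ⟨!![1, t; 0, 1], by simp [Matrix.det_fin_two_of]⟩

/-!
Ping-pong on `ℤ[i]²`. Let `X_true` be the vectors `(x, y)` with `|x| < |y|` and `X_false` those with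
`|y| < |x|`. For `n ≠ 0` we have `u_s^{*n} = (1, 0; ns, 1)` with `|ns| ≥ |s| ≥ 2`, and
`|ns·x + y| ≥ 2|x| - |y| > |x|` whenever `|y| < |x|`, so `u_s^{*n}` maps `X_false` into `X_true`;
symmetrically `u_tⁿ` maps `X_true` into `X_false`, and the ping-pong lemma gives injectivity.
If `φ w = λ • 1`, then `λ² = det (φ w) = 1`, so `φ (w²) = 1`; hence `w² = 1`, and `w = 1` because
free groups are torsion-free.
-/

open Function

theorem FreeGroup.injective_lift_of_ping_pong_zpow {ι G α : Type*} [Nontrivial ι] [Group G]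
    [MulAction G α] (a : ι → G) (X : ι → Set α) (hX : ∀ i, (X i).Nonempty)
    (hXdisj : Pairwise (Disjoint on X))
    (hpp : Pairwise fun i j => ∀ n : ℤ, n ≠ 0 → Set.MapsTo (a i ^ n • ·) (X j) (X i)) :
    Injective (FreeGroup.lift a) := by
  have hfactor : FreeGroup.lift a =
      (Monoid.CoprodI.lift fun i => FreeGroup.lift fun _ : Unit => a i).comp
        freeGroupEquivCoprodI.toMonoidHom := by
    ext i
    simp
  rw [hfactor, MonoidHom.coe_comp]
  refine Injective.comp ?_ freeGroupEquivCoprodI.injective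
  refine Monoid.CoprodI.lift_injective_of_ping_pong _ ?_ X hX hXdisj ?_
  · exact Or.inr ⟨Classical.arbitrary ι,
      (Cardinal.natCast_lt_aleph0 (n := 3)).le.trans (Cardinal.aleph0_le_mk _)⟩
  · intro i j hij
    refine FreeGroup.freeGroupUnitEquivInt.forall_congr_left.mpr fun n hn => ?_
    have hn0 : n ≠ 0 := by
      rintro rfl
      exact hn (by simp [FreeGroup.freeGroupUnitEquivInt])
    simp only [FreeGroup.freeGroupUnitEquivInt, Equiv.coe_fn_symm_mk, map_zpow,
      FreeGroup.lift_apply_of, Set.smul_set_subset_iff]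
    exact hpp hij n hn0

theorem Matrix.SpecialLinearGroup.pow_card_eq_one_of_coe_eq_smul_one {n R : Type*} [Fintype n]
    [DecidableEq n] [CommRing R] {g : Matrix.SpecialLinearGroup n R} {c : R}
    (hg : (g : Matrix n n R) = c • 1) : g ^ Fintype.card n = 1 := by
  have hc : c ^ Fintype.card n = 1 := by
    simpa [hg, Matrix.det_smul] using g.det_coe
  ext1
  rw [Matrix.SpecialLinearGroup.coe_pow, hg, smul_pow, one_pow, hc, one_smul,
    Matrix.SpecialLinearGroup.coe_one]

theorem norm_lt_norm_mul_add {R : Type*} [SeminormedRing R] [NormMulClass R] {a b c : R}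
    (ha : 2 ≤ ‖a‖) (hcb : ‖c‖ < ‖b‖) : ‖b‖ < ‖a * b + c‖ := by
  have hab : 2 * ‖b‖ ≤ ‖a * b‖ := by
    rw [norm_mul]
    exact mul_le_mul_of_nonneg_right ha (norm_nonneg b)
  have := norm_sub_le (a * b + c) c
  rw [add_sub_cancel_right] at this
  linarith

theorem GaussianInt.two_le_norm_intCast_mul {s : GaussianInt} (hs : 2 ≤ ‖(s : ℂ)‖) {n : ℤ}
    (hn : n ≠ 0) : 2 ≤ ‖((n * s : GaussianInt) : ℂ)‖ := by
  have hn : (1 : ℝ) ≤ |(n : ℝ)| := by exact_mod_cast Int.one_le_abs hn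
  rw [map_mul, map_intCast, norm_mul, Complex.norm_intCast]
  nlinarith [_root_.norm_nonneg (s : ℂ)]

section Unipotent

open Matrix

theorem lowerUnip_zero : lowerUnip 0 = 1 :=
  Subtype.ext <| by simp [lowerUnip, one_fin_two]

theorem upperUnip_zero : upperUnip 0 = 1 :=
  Subtype.ext <| by simp [upperUnip, one_fin_two]

theorem lowerUnip_add (a b : GaussianInt) : lowerUnip (a + b) = lowerUnip a * lowerUnip b := by
  refine Subtype.ext ?_
  change !![1, 0; a + b, 1] = !![1, 0; a, 1] * !![1, 0; b, 1]
  simp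

theorem upperUnip_add (a b : GaussianInt) : upperUnip (a + b) = upperUnip a * upperUnip b := by
  refine Subtype.ext ?_
  change !![1, a + b; 0, 1] = !![1, a; 0, 1] * !![1, b; 0, 1]
  simp [add_comm]

def lowerUnipHom : Multiplicative GaussianInt →* SpecialLinearGroup (Fin 2) GaussianInt where
  toFun a := lowerUnip a.toAdd
  map_one' := lowerUnip_zero
  map_mul' a b := lowerUnip_add a.toAdd b.toAdd

def upperUnipHom : Multiplicative GaussianInt →* SpecialLinearGroup (Fin 2) GaussianInt where
  toFun a := upperUnip a.toAdd
  map_one' := upperUnip_zero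
  map_mul' a b := upperUnip_add a.toAdd b.toAdd

theorem lowerUnip_zpow (s : GaussianInt) (n : ℤ) : lowerUnip s ^ n = lowerUnip (n * s) := by
  rw [← zsmul_eq_mul]
  exact (map_zpow lowerUnipHom (.ofAdd s) n).symm

theorem upperUnip_zpow (t : GaussianInt) (n : ℤ) : upperUnip t ^ n = upperUnip (n * t) := by
  rw [← zsmul_eq_mul]
  exact (map_zpow upperUnipHom (.ofAdd t) n).symm

theorem lowerUnip_smul (m : GaussianInt) (v : Fin 2 → GaussianInt) :
    lowerUnip m • v = ![v 0, m * v 0 + v 1] := by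
  change (lowerUnip m : Matrix (Fin 2) (Fin 2) GaussianInt) *ᵥ v = _
  simp [lowerUnip, vecHead, vecTail]

theorem upperUnip_smul (m : GaussianInt) (v : Fin 2 → GaussianInt) :
    upperUnip m • v = ![v 0 + m * v 1, v 1] := by
  change (upperUnip m : Matrix (Fin 2) (Fin 2) GaussianInt) *ᵥ v = _
  simp [upperUnip, vecHead, vecTail]

end Unipotent

def pingPongSet (b : Bool) : Set (Fin 2 → GaussianInt) :=
  if b then {v | ‖(v 0 : ℂ)‖ < ‖(v 1 : ℂ)‖} else {v | ‖(v 1 : ℂ)‖ < ‖(v 0 : ℂ)‖}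

theorem pingPongSet_nonempty (b : Bool) : (pingPongSet b).Nonempty := by
  cases b
  · exact ⟨![1, 0], by simp [pingPongSet]⟩
  · exact ⟨![0, 1], by simp [pingPongSet]⟩

theorem pairwise_disjoint_pingPongSet : Pairwise (Disjoint on pingPongSet) := by
  rintro (_ | _) (_ | _) hne <;> simp only [ne_eq, not_true_eq_false] at hne <;>
    simpa [onFun, pingPongSet, Set.disjoint_left] using fun _ => le_of_lt

theorem mapsTo_lowerUnip_smul {m : GaussianInt} (hm : 2 ≤ ‖(m : ℂ)‖) :
    Set.MapsTo (lowerUnip m • ·) (pingPongSet false) (pingPongSet true) := fun v hv => by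
  simpa [pingPongSet, lowerUnip_smul] using norm_lt_norm_mul_add hm hv

theorem mapsTo_upperUnip_smul {m : GaussianInt} (hm : 2 ≤ ‖(m : ℂ)‖) :
    Set.MapsTo (upperUnip m • ·) (pingPongSet true) (pingPongSet false) := fun v hv => by
  simpa [pingPongSet, upperUnip_smul, add_comm] using norm_lt_norm_mul_add hm hv

theorem injective_lift_lowerUnip_upperUnip {s t : GaussianInt} (hs : 2 ≤ ‖(s : ℂ)‖)
    (ht : 2 ≤ ‖(t : ℂ)‖) :
    Injective (FreeGroup.lift fun b : Bool => if b then lowerUnip s else upperUnip t) := by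
  refine FreeGroup.injective_lift_of_ping_pong_zpow _ pingPongSet pingPongSet_nonempty
    pairwise_disjoint_pingPongSet ?_
  rintro (_ | _) (_ | _) hne n hn <;> simp only [ne_eq, not_true_eq_false] at hne
  · simpa [upperUnip_zpow] using
      mapsTo_upperUnip_smul (GaussianInt.two_le_norm_intCast_mul ht hn)
  · simpa [lowerUnip_zpow] using
      mapsTo_lowerUnip_smul (GaussianInt.two_le_norm_intCast_mul hs hn)

theorem stmt_4 (s t : GaussianInt)
    (hs : 2 ≤ ‖GaussianInt.toComplex s‖)
    (ht : 2 ≤ ‖GaussianInt.toComplex t‖)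
    (φ : FreeGroup Bool →* Matrix.SpecialLinearGroup (Fin 2) GaussianInt)
    (hφ : φ = FreeGroup.lift (fun b => if b then lowerUnip s else upperUnip t)) :
    Function.Injective φ ∧
      ∀ w : FreeGroup Bool, w ≠ 1 → ∀ lam : GaussianInt,
        ((φ w : Matrix.SpecialLinearGroup (Fin 2) GaussianInt) : Matrix (Fin 2) (Fin 2) GaussianInt)
          ≠ lam • (1 : Matrix (Fin 2) (Fin 2) GaussianInt) := by
  have hinj : Injective φ := hφ ▸ injective_lift_lowerUnip_upperUnip hs ht
  refine ⟨hinj, fun w hw c hc => hw ?_⟩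
  have hsq : φ (w ^ 2) = φ (1 ^ 2) := by
    simpa [map_pow] using Matrix.SpecialLinearGroup.pow_card_eq_one_of_coe_eq_smul_one hc
  exact pow_left_injective two_ne_zero (hinj hsq)
end

section
/- Let p be a prime, Γ ≤ 𝔽_p^* a multiplicative subgroup, k ≥ 2 an integer, and g = (a, b; c, d) ∈ GL₂(𝔽_p) with c ≠ 0. Let α₁, …, α_k ∈ 𝔽_p^* and β₁, …, β_k ∈ 𝔽_p satisfy β₁ = −d/c and c·β_j + d ≠ 0 for all j ∈ {2, …, k}. Then the Möbius image of Γ_{α₁,…,α_k; β₁,…,β_k} under g equals Γ_{γ₁,…,γ_k; β'₁,…,β'_k}, where β'₁ = a/c, β'_j = (a·β_j + b)/(c·β_j + d) for j ≥ 2, γ₁ = −det(g)/(c²·α₁), and γ_j = α_j·det(g)/(α₁·c·(c·β_j + d)) for j ≥ 2. -/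
/-- The intersection of dilated-shifted copies of a multiplicative subgroup:
`Γ_{α₁,…,α_k; β₁,…,β_k} := (α₁Γ + β₁) ∩ ⋯ ∩ (α_kΓ + β_k)`, viewed inside `𝔽_p`. -/
def shiftedInter {p : ℕ} (Γ : Subgroup (ZMod p)ˣ) {k : ℕ} (α β : Fin k → ZMod p) :
    Set (ZMod p) :=
  {x | ∀ j, ∃ γ ∈ Γ, x = α j * ((γ : (ZMod p)ˣ) : ZMod p) + β j}

/-!
Write `g x = (a x + b) / (c x + d)` and `D = a d - b c`. Since `β₀ = -d/c` is the pole of `g`,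
a point `x = α₀ γ₀ + β₀` has `c x + d = c α₀ γ₀`, so `g x = a/c - D / (c² α₀ γ₀)`:
writing `γ'_j` for the new dilations, the coset `α₀ Γ + β₀` is mapped onto `γ'₀ Γ + a/c` by
`γ₀ ↦ γ₀⁻¹`. For the other indices the identity
`g x - g β = D (x - β) / ((c x + d)(c β + d))` shows that `x - β_j = α_j γ` holds exactly when
`g x - g β_j = γ'_j (γ / γ₀)`, and `γ ∈ Γ ↔ γ / γ₀ ∈ Γ` because `Γ` is a group.
-/

section Mobius

variable {K : Type*} [Field K] {a b c d : K}

lemma mul_add_neg_div_add (hc : c ≠ 0) (t : K) : c * (t + -d / c) + d = c * t := by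
  field_simp
  ring

lemma mobius_sub_mobius {x y : K} (hx : c * x + d ≠ 0) (hy : c * y + d ≠ 0) :
    (a * x + b) / (c * x + d) - (a * y + b) / (c * y + d)
      = (a * d - b * c) * (x - y) / ((c * x + d) * (c * y + d)) := by
  rw [div_sub_div _ _ hx hy]
  ring

lemma mobius_mul_add_neg_div {α₀ u : K} (hc : c ≠ 0) (hα₀ : α₀ ≠ 0) (hu : u ≠ 0) :
    (a * (α₀ * u + -d / c) + b) / (c * (α₀ * u + -d / c) + d)
      = -(a * d - b * c) / (c ^ 2 * α₀) * u⁻¹ + a / c := by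
  field_simp
  ring

lemma mobius_eq_mul_add_iff {x α α₀ β u w : K} (hD : a * d - b * c ≠ 0) (hc : c ≠ 0)
    (hα₀ : α₀ ≠ 0) (hu : u ≠ 0) (hβ : c * β + d ≠ 0) (hx : c * x + d = c * (α₀ * u)) :
    (a * x + b) / (c * x + d)
        = α * (a * d - b * c) / (α₀ * c * (c * β + d)) * w + (a * β + b) / (c * β + d)
      ↔ x = α * (w * u) + β := by
  have hxd : c * x + d ≠ 0 := hx ▸ mul_ne_zero hc (mul_ne_zero hα₀ hu)
  have hrhs : α * (a * d - b * c) / (α₀ * c * (c * β + d)) * w * ((c * x + d) * (c * β + d))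
      = (a * d - b * c) * (α * (w * u)) := by
    rw [hx]
    field_simp
  rw [← sub_eq_iff_eq_add, mobius_sub_mobius hxd hβ, div_eq_iff (mul_ne_zero hxd hβ), hrhs,
    mul_right_inj' hD, sub_eq_iff_eq_add]

lemma exists_mem_eq_mul_add_iff_mobius {Γ : Subgroup Kˣ} {γ₀ : Kˣ} {x α α₀ β : K}
    (hγ₀ : γ₀ ∈ Γ) (hD : a * d - b * c ≠ 0) (hc : c ≠ 0) (hα₀ : α₀ ≠ 0)
    (hβ : c * β + d ≠ 0) (hx : c * x + d = c * (α₀ * γ₀)) :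
    (∃ γ ∈ Γ, x = α * (γ : K) + β)
      ↔ ∃ γ ∈ Γ, (a * x + b) / (c * x + d)
          = α * (a * d - b * c) / (α₀ * c * (c * β + d)) * (γ : K) + (a * β + b) / (c * β + d) := by
  constructor
  · rintro ⟨γ, hγ, hxγ⟩
    refine ⟨γ * γ₀⁻¹, mul_mem hγ (inv_mem hγ₀), ?_⟩
    rw [mobius_eq_mul_add_iff hD hc hα₀ γ₀.ne_zero hβ hx, hxγ]
    simp
  · rintro ⟨w, hw, hgx⟩
    refine ⟨w * γ₀, mul_mem hw hγ₀, ?_⟩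
    rw [Units.val_mul]
    exact (mobius_eq_mul_add_iff hD hc hα₀ γ₀.ne_zero hβ hx).mp hgx

end Mobius

/-- Here the number of shifts is `k = m + 2 ≥ 2`, with indices `0, 1, …, k − 1`;
the index `0` plays the role of the index `1` in the paper. -/
theorem stmt_17 (p : ℕ) [Fact p.Prime] (Γ : Subgroup (ZMod p)ˣ) (m : ℕ)
    (M : Matrix (Fin 2) (Fin 2) (ZMod p)) (hdet : M.det ≠ 0) (hc : M 1 0 ≠ 0)
    (α β : Fin (m + 2) → ZMod p) (hα : ∀ j, α j ≠ 0)
    (hβ0 : β 0 = -(M 1 1) / M 1 0)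
    (hβ : ∀ j : Fin (m + 2), j ≠ 0 → M 1 0 * β j + M 1 1 ≠ 0) :
    (fun x => (M 0 0 * x + M 0 1) / (M 1 0 * x + M 1 1)) '' shiftedInter Γ α β
      = shiftedInter Γ
          (fun j => if j = 0 then -M.det / (M 1 0 ^ 2 * α 0)
            else α j * M.det / (α 0 * M 1 0 * (M 1 0 * β j + M 1 1)))
          (fun j => if j = 0 then M 0 0 / M 1 0
            else (M 0 0 * β j + M 0 1) / (M 1 0 * β j + M 1 1)) := by
  rw [Matrix.det_fin_two] at hdet ⊢
  ext y
  constructor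
  · rintro ⟨x, hx, rfl⟩
    obtain ⟨γ₀, hγ₀, hx₀⟩ := hx 0
    intro j
    rcases eq_or_ne j 0 with rfl | hj
    · refine ⟨γ₀⁻¹, inv_mem hγ₀, ?_⟩
      dsimp only
      rw [if_pos rfl, if_pos rfl, hx₀, hβ0, mobius_mul_add_neg_div hc (hα 0) γ₀.ne_zero,
        Units.val_inv_eq_inv_val]
    · have hpole : M 1 0 * x + M 1 1 = M 1 0 * (α 0 * γ₀) := by
        rw [hx₀, hβ0, mul_add_neg_div_add hc]
      simpa only [if_neg hj] using
        (exists_mem_eq_mul_add_iff_mobius hγ₀ hdet hc (hα 0) (hβ j hj) hpole).mp (hx j)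
  · intro hy
    obtain ⟨δ₀, hδ₀, hy₀⟩ := hy 0
    have hgx : (M 0 0 * (α 0 * ↑δ₀⁻¹ + β 0) + M 0 1) / (M 1 0 * (α 0 * ↑δ₀⁻¹ + β 0) + M 1 1)
        = y := by
      dsimp only at hy₀
      rw [if_pos rfl, if_pos rfl] at hy₀
      rw [hy₀, hβ0, mobius_mul_add_neg_div hc (hα 0) δ₀⁻¹.ne_zero, Units.val_inv_eq_inv_val,
        inv_inv]
    refine ⟨α 0 * ↑δ₀⁻¹ + β 0, fun j => ?_, hgx⟩
    rcases eq_or_ne j 0 with rfl | hj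
    · exact ⟨δ₀⁻¹, inv_mem hδ₀, rfl⟩
    · refine (exists_mem_eq_mul_add_iff_mobius (inv_mem hδ₀) hdet hc (hα 0) (hβ j hj)
        (by rw [hβ0, mul_add_neg_div_add hc])).mpr ?_
      simpa only [hgx, if_neg hj] using hy j
end

section
/- There exist an absolute constant c > 0 and a threshold H₀ such that: for every prime p and all positive integers H, H_*, a with H₀ ≤ H_* ≤ H, a + H < p, and 16·H_*²·H < p, one has |{ y·(a + x)^{−1} ∈ 𝔽_p : x ∈ [H], y ∈ [H_*] }| ≥ c · H_* · H. -/
open Finset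
open scoped Classical

/-!
Fix a value `v` of `(x, y) ↦ y (a + x)⁻¹` and look at its fibre in the box `[1, H] × [1, K]`,
i.e. the points with `y ≡ v x + v a`. Any two difference vectors of the fibre have cross product
`≡ 0 (mod p)` and of absolute value `< 2HK < p`, so the fibre is collinear in `ℤ²`. Taking the
pair `P, Q` with the smallest horizontal gap `s` and `t = Q.2 - P.2`, all horizontal gaps are
`≥ s` and all vertical gaps are `≥ |t|`; hence a fibre with `r` points has `(r - 1) s ≤ H`,
`(r - 1) |t| ≤ K`, i.e. `r - 1 ≤ √(HK) / √(s |t|)`. Since `t ≡ v s`, the step `(s, t)`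
determines `v`. Fibres with more than `32` points have `s ≤ H / 32`, `|t| ≤ K / 32`, and summing
`√(HK) / √(s |t|)` over all such steps gives at most `HK / 4`. So `HK ≤ 32 · #values + HK / 4`.
-/

lemma inv_sqrt_succ_le (n : ℕ) : (√((n : ℝ) + 1))⁻¹ ≤ 2 * (√((n : ℝ) + 1) - √n) := by
  have hpos : 0 < √((n : ℝ) + 1) := Real.sqrt_pos.2 (by positivity)
  have hle : √(n : ℝ) ≤ √((n : ℝ) + 1) := Real.sqrt_le_sqrt (by linarith)
  rw [inv_le_iff_one_le_mul₀' hpos]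
  nlinarith [Real.sq_sqrt (by positivity : (0 : ℝ) ≤ n + 1),
    Real.sq_sqrt (by positivity : (0 : ℝ) ≤ n), Real.sqrt_nonneg (n : ℝ)]

lemma sum_Icc_inv_sqrt_le (n : ℕ) : ∑ k ∈ Icc 1 n, (√(k : ℝ))⁻¹ ≤ 2 * √(n : ℝ) := by
  induction n with
  | zero => simp
  | succ n ih =>
    rw [Finset.sum_Icc_succ_top (by omega)]
    push_cast
    linarith [inv_sqrt_succ_le n]

lemma sum_Icc_erase_zero_inv_sqrt_abs_le (n : ℕ) :
    ∑ t ∈ (Icc (-n : ℤ) n).erase 0, (√|(t : ℝ)|)⁻¹ ≤ 4 * √(n : ℝ) := by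
  induction n with
  | zero => simp
  | succ n ih =>
    have hIcc : (Icc (-(n + 1 : ℕ) : ℤ) (n + 1 : ℕ)).erase 0
        = insert ((n : ℤ) + 1) (insert (-((n : ℤ) + 1)) ((Icc (-n : ℤ) n).erase 0)) := by
      ext t; simp only [mem_erase, mem_Icc, mem_insert]; push_cast; omega
    rw [hIcc, sum_insert (by simp; omega), sum_insert (by simp)]
    have habs : |((n : ℝ) + 1)| = (n : ℝ) + 1 := abs_of_nonneg (by positivity)
    push_cast
    rw [abs_neg, habs]
    linarith [inv_sqrt_succ_le n]

lemma le_sqrt_mul_mul_inv_sqrt_mul_inv_sqrt {x a b A B : ℝ} (hx : 0 ≤ x) (ha : 0 < a) (hb : 0 < b)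
    (hxa : x * a ≤ A) (hxb : x * b ≤ B) : x ≤ √(A * B) * ((√a)⁻¹ * (√b)⁻¹) := by
  have hprod : (x * √a * √b) ^ 2 ≤ A * B := by
    rw [mul_pow, mul_pow, Real.sq_sqrt ha.le, Real.sq_sqrt hb.le]
    nlinarith [mul_le_mul hxa hxb (by positivity) (by nlinarith)]
  have := Real.le_sqrt_of_sq_le hprod
  rw [← mul_inv, le_mul_inv_iff₀ (by positivity), ← mul_assoc]
  exact this

lemma Finset.card_sub_one_mul_le_of_separated {α : Type*} {S : Finset α} {g : α → ℕ} {s M : ℕ}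
    (hs : 0 < s) (hM : ∀ x ∈ S, g x ≤ M)
    (hsep : ∀ x ∈ S, ∀ y ∈ S, x ≠ y → (s : ℤ) ≤ |(g x : ℤ) - g y|) :
    (#S - 1) * s ≤ M := by
  have hcard : #S ≤ M / s + 1 := by
    rw [← card_range (M / s + 1)]
    refine card_le_card_of_injOn (fun x => g x / s) (fun x hx => ?_) (fun x hx y hy hxy => ?_)
    · simpa [Nat.lt_succ_iff] using Nat.div_le_div_right (c := s) (hM x hx)
    · by_contra hne
      have hgap := le_abs'.1 (hsep x hx y hy hne)
      have hx' := Nat.div_add_mod (g x) s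
      have hy' := Nat.div_add_mod (g y) s
      have := Nat.mod_lt (g x) hs
      have := Nat.mod_lt (g y) hs
      simp only at hxy
      rw [hxy] at hx'
      omega
  calc (#S - 1) * s ≤ M / s * s := Nat.mul_le_mul_right s (Nat.sub_le_of_le_add hcard)
    _ ≤ M := Nat.div_mul_le_self M s

lemma Finset.exists_min_gap {α : Type*} {S : Finset α} {g : α → ℕ} (hS : 2 ≤ #S)
    (hg : Set.InjOn g S) :
    ∃ P ∈ S, ∃ Q ∈ S, g P < g Q ∧
      ∀ A ∈ S, ∀ B ∈ S, A ≠ B → (g Q : ℤ) - g P ≤ |(g A : ℤ) - g B| := by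
  have hne : ((S ×ˢ S).filter fun PQ => g PQ.1 < g PQ.2).Nonempty := by
    obtain ⟨A, hA, B, hB, hAB⟩ := one_lt_card.1 hS
    rcases lt_or_gt_of_ne (hg.ne hA hB hAB) with h | h
    · exact ⟨(A, B), by simp [hA, hB, h]⟩
    · exact ⟨(B, A), by simp [hA, hB, h]⟩
  obtain ⟨⟨P, Q⟩, hPQ, hmin⟩ := exists_min_image _ (fun PQ => g PQ.2 - g PQ.1) hne
  simp only [mem_filter, mem_product] at hPQ hmin
  refine ⟨P, hPQ.1.1, Q, hPQ.1.2, hPQ.2, fun A hA B hB hAB => ?_⟩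
  rcases lt_or_gt_of_ne (hg.ne hA hB hAB) with h | h
  · have := hmin (A, B) ⟨⟨hA, hB⟩, h⟩
    simp only at this
    rw [abs_sub_comm, abs_of_pos (by omega)]
    omega
  · have := hmin (B, A) ⟨⟨hB, hA⟩, h⟩
    simp only at this
    rw [abs_of_pos (by omega)]
    omega

lemma Finset.card_le_mul_card_image_add_sum {α β δ : Type*} [DecidableEq β] {G : Finset α} {f : α → β}
    {D : Finset δ} {φ : δ → β} {w : δ → ℝ} {m : ℝ} (hw : ∀ d ∈ D, 0 ≤ w d)
    (hfiber : ∀ v ∈ G.image f, (#{q ∈ G | f q = v} : ℝ) ≤ m + ∑ d ∈ D with φ d = v, w d) :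
    (#G : ℝ) ≤ m * #(G.image f) + ∑ d ∈ D, w d := by
  calc (#G : ℝ) = ∑ v ∈ G.image f, (#{q ∈ G | f q = v} : ℝ) := by
        rw [card_eq_sum_card_image f G]; push_cast; rfl
    _ ≤ ∑ v ∈ G.image f, (m + ∑ d ∈ D with φ d = v, w d) := sum_le_sum hfiber
    _ ≤ m * #(G.image f) + ∑ d ∈ D, w d := by
        rw [sum_add_distrib, sum_const, nsmul_eq_mul, mul_comm]
        gcongr
        exact sum_fiberwise_le_sum_of_sum_fiber_nonneg fun _ _ =>
          sum_nonneg fun d hd => hw d (mem_filter.1 hd).1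

lemma Int.eq_zero_of_intCast_zmod_eq_zero {p : ℕ} {n : ℤ} (h : (n : ZMod p) = 0) (hn : |n| < p) :
    n = 0 :=
  Int.eq_zero_of_abs_lt_dvd ((ZMod.intCast_zmod_eq_zero_iff_dvd n p).1 h) hn

lemma Int.mul_eq_mul_of_intCast_eq_mul {p : ℕ} {v : ZMod p} {x y x' y' : ℤ}
    (h : (y : ZMod p) = v * x) (h' : (y' : ZMod p) = v * x') (hlt : |x * y' - x' * y| < p) :
    x * y' = x' * y := by
  have : x * y' - x' * y = 0 :=
    Int.eq_zero_of_intCast_zmod_eq_zero (by push_cast; rw [h, h']; ring) hlt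
  linarith

lemma ZMod.natCast_ne_zero_of_lt {p n : ℕ} (h0 : n ≠ 0) (h : n < p) : (n : ZMod p) ≠ 0 := by
  rw [Ne, ZMod.natCast_eq_zero_iff]
  exact fun hd => h0 (Nat.eq_zero_of_dvd_of_lt hd h)

lemma abs_sub_le_of_mem_Icc {a b n : ℕ} (ha : a ∈ Icc 1 n) (hb : b ∈ Icc 1 n) :
    |(b : ℤ) - a| ≤ n - 1 := by
  rw [mem_Icc] at ha hb
  rw [abs_le]; constructor <;> omega

noncomputable def steps (S T : ℕ) : Finset (ℕ × ℤ) := Icc 1 S ×ˢ (Icc (-T : ℤ) T).erase 0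

noncomputable def stepWeight (d : ℕ × ℤ) : ℝ := (√(d.1 : ℝ))⁻¹ * (√|(d.2 : ℝ)|)⁻¹

def stepSlope (p : ℕ) (d : ℕ × ℤ) : ZMod p := (d.2 : ZMod p) * (d.1 : ZMod p)⁻¹

lemma stepWeight_nonneg (d : ℕ × ℤ) : 0 ≤ stepWeight d := by
  unfold stepWeight; positivity

lemma sum_steps_stepWeight_le (S T : ℕ) :
    ∑ d ∈ steps S T, stepWeight d ≤ 8 * √((S : ℝ) * T) := by
  rw [steps, sum_product, Real.sqrt_mul (Nat.cast_nonneg S)]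
  simp only [stepWeight, ← mul_sum, ← sum_mul]
  calc (∑ s ∈ Icc 1 S, (√(s : ℝ))⁻¹) * ∑ t ∈ (Icc (-T : ℤ) T).erase 0, (√|(t : ℝ)|)⁻¹
      ≤ (2 * √(S : ℝ)) * (4 * √(T : ℝ)) :=
        mul_le_mul (sum_Icc_inv_sqrt_le S) (sum_Icc_erase_zero_inv_sqrt_abs_le T)
          (sum_nonneg fun _ _ => by positivity) (by positivity)
    _ = 8 * (√(S : ℝ) * √(T : ℝ)) := by ring

lemma sqrt_mul_mul_sum_steps_stepWeight_le (H K : ℕ) :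
    √((H : ℝ) * K) * ∑ d ∈ steps (H / 32) (K / 32), stepWeight d ≤ H * K / 4 := by
  have hS : ((H / 32 : ℕ) : ℝ) ≤ H / 32 := Nat.cast_div_le.trans_eq (by norm_num)
  have hT : ((K / 32 : ℕ) : ℝ) ≤ K / 32 := Nat.cast_div_le.trans_eq (by norm_num)
  have hST : √(((H / 32 : ℕ) : ℝ) * (K / 32 : ℕ)) ≤ √((H : ℝ) * K) / 32 := by
    calc _ ≤ √((H / 32 : ℝ) * (K / 32)) := Real.sqrt_le_sqrt (by gcongr)
      _ = √((H : ℝ) * K) / 32 := by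
        rw [show (H / 32 : ℝ) * (K / 32) = H * K / 32 ^ 2 by ring,
          Real.sqrt_div' _ (by norm_num), Real.sqrt_sq (by norm_num)]
  calc _ ≤ √((H : ℝ) * K) * (8 * (√((H : ℝ) * K) / 32)) := by
        gcongr
        exact (sum_steps_stepWeight_le _ _).trans (by gcongr)
    _ = H * K / 4 := by
        linear_combination (Real.mul_self_sqrt (by positivity : (0 : ℝ) ≤ H * K)) / 4


namespace LineModP

variable {p H K : ℕ} {v c : ZMod p} {F : Finset (ℕ × ℕ)}

lemma sub_snd_eq_mul_sub_fst (hline : ∀ q ∈ F, (q.2 : ZMod p) = v * q.1 + c)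
    {A B : ℕ × ℕ} (hA : A ∈ F) (hB : B ∈ F) :
    (((B.2 : ℤ) - A.2 : ℤ) : ZMod p) = v * (((B.1 : ℤ) - A.1 : ℤ) : ZMod p) := by
  push_cast
  rw [hline A hA, hline B hB]
  ring

lemma cross_eq (hbox : F ⊆ Icc 1 H ×ˢ Icc 1 K) (hline : ∀ q ∈ F, (q.2 : ZMod p) = v * q.1 + c)
    (hHK : 2 * H * K < p) {A B P Q : ℕ × ℕ} (hA : A ∈ F) (hB : B ∈ F) (hP : P ∈ F) (hQ : Q ∈ F) :
    ((B.1 : ℤ) - A.1) * ((Q.2 : ℤ) - P.2) = ((Q.1 : ℤ) - P.1) * ((B.2 : ℤ) - A.2) := by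
  refine Int.mul_eq_mul_of_intCast_eq_mul (sub_snd_eq_mul_sub_fst hline hA hB)
    (sub_snd_eq_mul_sub_fst hline hP hQ) ?_
  obtain ⟨hA1, hA2⟩ := mem_product.1 (hbox hA)
  obtain ⟨hB1, hB2⟩ := mem_product.1 (hbox hB)
  obtain ⟨hP1, hP2⟩ := mem_product.1 (hbox hP)
  obtain ⟨hQ1, hQ2⟩ := mem_product.1 (hbox hQ)
  have hH : (1 : ℤ) ≤ H := by have := (mem_Icc.1 hA1); omega
  have hK : (1 : ℤ) ≤ K := by have := (mem_Icc.1 hA2); omega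
  have hprod (x y : ℤ) (hx : |x| ≤ H - 1) (hy : |y| ≤ K - 1) : |x * y| ≤ (H - 1) * (K - 1) := by
    rw [abs_mul]; exact mul_le_mul hx hy (abs_nonneg _) (by linarith)
  have h1 := hprod _ _ (abs_sub_le_of_mem_Icc hA1 hB1) (abs_sub_le_of_mem_Icc hP2 hQ2)
  have h2 := hprod _ _ (abs_sub_le_of_mem_Icc hP1 hQ1) (abs_sub_le_of_mem_Icc hA2 hB2)
  have hp : (2 * H * K : ℤ) < p := by exact_mod_cast hHK
  calc _ ≤ _ := abs_sub _ _
    _ < (p : ℤ) := by nlinarith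

lemma eq_of_fst_eq (hbox : F ⊆ Icc 1 H ×ˢ Icc 1 K) (hline : ∀ q ∈ F, (q.2 : ZMod p) = v * q.1 + c)
    (hHK : 2 * H * K < p) {A B : ℕ × ℕ} (hA : A ∈ F) (hB : B ∈ F) (h : A.1 = B.1) : A = B := by
  obtain ⟨hA1, hA2⟩ := mem_product.1 (hbox hA)
  obtain ⟨-, hB2⟩ := mem_product.1 (hbox hB)
  have hdy := sub_snd_eq_mul_sub_fst hline hA hB
  rw [h, sub_self, Int.cast_zero, mul_zero] at hdy
  have hK : |(B.2 : ℤ) - A.2| < p := by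
    have := abs_sub_le_of_mem_Icc hA2 hB2
    have := (mem_Icc.1 hA1).1.trans (mem_Icc.1 hA1).2
    have : K < p := by nlinarith
    omega
  have := Int.eq_zero_of_intCast_zmod_eq_zero hdy hK
  exact Prod.ext h (by omega)

lemma eq_of_snd_eq [Fact p.Prime] (hbox : F ⊆ Icc 1 H ×ˢ Icc 1 K)
    (hline : ∀ q ∈ F, (q.2 : ZMod p) = v * q.1 + c) (hHK : 2 * H * K < p) (hv : v ≠ 0)
    {A B : ℕ × ℕ} (hA : A ∈ F) (hB : B ∈ F) (h : A.2 = B.2) : A = B := by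
  obtain ⟨hA1, hA2⟩ := mem_product.1 (hbox hA)
  obtain ⟨hB1, -⟩ := mem_product.1 (hbox hB)
  have hdx := sub_snd_eq_mul_sub_fst hline hA hB
  rw [h, sub_self, Int.cast_zero, zero_eq_mul] at hdx
  have hH : |(B.1 : ℤ) - A.1| < p := by
    have := abs_sub_le_of_mem_Icc hA1 hB1
    have := (mem_Icc.1 hA2).1.trans (mem_Icc.1 hA2).2
    have : H < p := by nlinarith
    omega
  have := Int.eq_zero_of_intCast_zmod_eq_zero (hdx.resolve_left hv) hH
  exact Prod.ext (by omega) h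

lemma exists_step [Fact p.Prime] (hbox : F ⊆ Icc 1 H ×ˢ Icc 1 K)
    (hline : ∀ q ∈ F, (q.2 : ZMod p) = v * q.1 + c) (hHK : 2 * H * K < p) (hv : v ≠ 0)
    (hF : 2 ≤ #F) :
    ∃ s : ℕ, ∃ t : ℤ, 0 < s ∧ t ≠ 0 ∧ (t : ZMod p) = v * s ∧
      (#F - 1) * s ≤ H ∧ (#F - 1) * t.natAbs ≤ K := by
  obtain ⟨P, hP, Q, hQ, hPQ, hgap⟩ :=
    exists_min_gap hF fun A hA B hB => eq_of_fst_eq hbox hline hHK hA hB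
  set s := Q.1 - P.1 with hs_def
  have hs : (s : ℤ) = Q.1 - P.1 := by omega
  set t : ℤ := Q.2 - P.2 with ht
  have htne : t ≠ 0 := fun h0 =>
    hPQ.ne (congrArg Prod.fst (eq_of_snd_eq hbox hline hHK hv hP hQ (by omega)))
  have hsep_snd (A) (hA : A ∈ F) (B) (hB : B ∈ F) (hAB : A ≠ B) :
      (t.natAbs : ℤ) ≤ |(A.2 : ℤ) - B.2| := by
    have hcross := congrArg (|·|) (cross_eq hbox hline hHK hA hB hP hQ)
    simp only [abs_mul, ← hs, ← ht, Nat.abs_cast] at hcross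
    rw [Int.natCast_natAbs, abs_sub_comm (A.2 : ℤ)]
    have hsx : (s : ℤ) ≤ |(B.1 : ℤ) - A.1| := by
      rw [abs_sub_comm]; exact hs ▸ hgap A hA B hB hAB
    have hspos : (0 : ℤ) < s := by omega
    nlinarith [abs_nonneg t]
  refine ⟨s, t, by omega, htne, ?_, ?_, ?_⟩
  · rw [← Int.cast_natCast, hs]
    exact sub_snd_eq_mul_sub_fst hline hP hQ
  · exact card_sub_one_mul_le_of_separated (by omega)
      (fun q hq => (mem_Icc.1 (mem_product.1 (hbox hq)).1).2)
      (fun A hA B hB hAB => hs ▸ hgap A hA B hB hAB)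
  · exact card_sub_one_mul_le_of_separated (by omega)
      (fun q hq => (mem_Icc.1 (mem_product.1 (hbox hq)).2).2) hsep_snd

lemma exists_mem_steps [Fact p.Prime] (hbox : F ⊆ Icc 1 H ×ˢ Icc 1 K)
    (hline : ∀ q ∈ F, (q.2 : ZMod p) = v * q.1 + c) (hHK : 2 * H * K < p) (hv : v ≠ 0)
    (hF : 32 < #F) :
    ∃ d ∈ steps (H / 32) (K / 32),
      stepSlope p d = v ∧ (#F : ℝ) - 1 ≤ √((H : ℝ) * K) * stepWeight d := by
  obtain ⟨s, t, hs, ht, hts, hsH, htK⟩ := exists_step hbox hline hHK hv (by omega)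
  have h32s : 32 * s ≤ H := (Nat.mul_le_mul_right s (by omega : 32 ≤ #F - 1)).trans hsH
  have h32t : 32 * t.natAbs ≤ K :=
    (Nat.mul_le_mul_right t.natAbs (by omega : 32 ≤ #F - 1)).trans htK
  refine ⟨(s, t), ?_, ?_, ?_⟩
  · simp only [steps, mem_product, mem_Icc, mem_erase]
    omega
  · have hsp : s < p := by nlinarith [Int.natAbs_pos.2 ht]
    rw [stepSlope, hts, mul_inv_cancel_right₀ (ZMod.natCast_ne_zero_of_lt hs.ne' hsp)]
  · have hF1 : ((#F - 1 : ℕ) : ℝ) = #F - 1 := by push_cast [show 1 ≤ #F by omega]; ring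
    have hsH' : ((#F : ℝ) - 1) * s ≤ H := by rw [← hF1]; exact_mod_cast hsH
    have htK' : ((#F : ℝ) - 1) * |(t : ℝ)| ≤ K := by
      rw [← hF1, ← Int.cast_abs, ← Nat.cast_natAbs]; exact_mod_cast htK
    have hF0 : (0 : ℝ) ≤ #F - 1 := by rw [← hF1]; positivity
    exact le_sqrt_mul_mul_inv_sqrt_mul_inv_sqrt hF0 (by exact_mod_cast hs) (by positivity)
      hsH' htK'

end LineModP

lemma card_fiber_le_add_sum_stepWeight {p : ℕ} [Fact p.Prime] {H K a : ℕ} (hap : a + H < p)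
    (hHK : 2 * H * K < p) (v : ZMod p) :
    (#{q ∈ Icc 1 H ×ˢ Icc 1 K | (q.2 : ZMod p) * ((a + q.1 : ℕ) : ZMod p)⁻¹ = v} : ℝ)
      ≤ 32 + ∑ d ∈ steps (H / 32) (K / 32) with stepSlope p d = v,
          √((H : ℝ) * K) * stepWeight d := by
  set F := {q ∈ Icc 1 H ×ˢ Icc 1 K | (q.2 : ZMod p) * ((a + q.1 : ℕ) : ZMod p)⁻¹ = v}
  have hweight_nonneg (d : ℕ × ℤ) : 0 ≤ √((H : ℝ) * K) * stepWeight d :=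
    mul_nonneg (Real.sqrt_nonneg _) (stepWeight_nonneg d)
  by_cases hsmall : #F ≤ 32
  · have : (#F : ℝ) ≤ 32 := by exact_mod_cast hsmall
    linarith [sum_nonneg fun d (_ : d ∈ {d ∈ steps (H / 32) (K / 32) | stepSlope p d = v}) =>
      hweight_nonneg d]
  have hbounds (q) (hq : q ∈ F) : (1 ≤ q.1 ∧ q.1 ≤ H) ∧ 1 ≤ q.2 ∧ q.2 ≤ K := by
    simpa only [mem_product, mem_Icc] using (mem_filter.1 hq).1
  have hunit (q) (hq : q ∈ F) : ((a + q.1 : ℕ) : ZMod p) ≠ 0 :=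
    ZMod.natCast_ne_zero_of_lt (by have := hbounds q hq; omega) (by have := hbounds q hq; omega)
  have hline (q) (hq : q ∈ F) : (q.2 : ZMod p) = v * q.1 + v * a := by
    rw [← mul_add, ← (mem_filter.1 hq).2, add_comm (q.1 : ZMod p), ← Nat.cast_add,
      inv_mul_cancel_right₀ (hunit q hq)]
  have hv : v ≠ 0 := by
    obtain ⟨q, hq⟩ : F.Nonempty := card_pos.1 (by omega)
    obtain ⟨⟨hx1, hxH⟩, hy1, hyK⟩ := hbounds q hq
    rw [← (mem_filter.1 hq).2]
    exact mul_ne_zero (ZMod.natCast_ne_zero_of_lt (by omega) (by nlinarith))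
      (inv_ne_zero (hunit q hq))
  obtain ⟨d, hd, hslope, hweight⟩ :=
    LineModP.exists_mem_steps (filter_subset _ _) hline hHK hv (by omega : 32 < #F)
  linarith [single_le_sum (s := {d ∈ steps (H / 32) (K / 32) | stepSlope p d = v})
    (fun d _ => hweight_nonneg d) (mem_filter.2 ⟨hd, hslope⟩)]

theorem stmt_19 :
    ∃ c : ℝ, 0 < c ∧ ∃ H₀ : ℕ, ∀ (p : ℕ) [Fact p.Prime],
      ∀ H Hs a : ℕ, H₀ ≤ Hs → Hs ≤ H → 0 < a → a + H < p → 16 * Hs ^ 2 * H < p →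
        c * (Hs : ℝ) * (H : ℝ)
          ≤ ((((Finset.Icc 1 H) ×ˢ (Finset.Icc 1 Hs)).image
              fun q => ((q.2 : ℕ) : ZMod p) * (((a + q.1 : ℕ) : ZMod p))⁻¹).card : ℝ) := by
  refine ⟨3 / 128, by norm_num, 0, fun p _ H K a _ _ _ hap hp => ?_⟩
  have hHK : 2 * H * K < p := by
    refine lt_of_le_of_lt ?_ hp
    rcases K.eq_zero_or_pos with rfl | hK
    · simp
    · nlinarith [Nat.mul_le_mul_left (H * K) hK]
  have hcount := card_le_mul_card_image_add_sum (G := Icc 1 H ×ˢ Icc 1 K)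
    (fun d _ => mul_nonneg (Real.sqrt_nonneg _) (stepWeight_nonneg d))
    (fun v _ => card_fiber_le_add_sum_stepWeight hap hHK v)
  rw [card_product, Nat.card_Icc, Nat.card_Icc, Nat.add_sub_cancel, Nat.add_sub_cancel,
    Nat.cast_mul, ← mul_sum] at hcount
  have := sqrt_mul_mul_sum_steps_stepWeight_le H K
  linarith
end
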